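/- The pseudo-distance d_T satisfies the triangle inequality: for topological spaces X, Y, Z with continuous filtering functions φ: X → ℝⁿ, ψ: Y → ℝⁿ, χ: Z → ℝⁿ and any integer k, if d_T(H_k^{(X,φ)}, H_k^{(Y,ψ)}) = ε₁ and d_T(H_k^{(Y,ψ)}, H_k^{(Z,χ)}) = ε₂ are finite, then d_T(H_k^{(X,φ)}, H_k^{(Z,χ)}) ≤ ε₁ + ε₂. -/

import Mathlib

open CategoryTheory

/-- The "chains with coefficients in `G`" functor `S ↦ S →₀ G`. -/
@[simps]
noncomputable def coeffFunctor (G : Type) [AddCommGroup G] : Type ⥤ AddCommGrpCat where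
  obj S := AddCommGrpCat.of (S →₀ G)
  map f := AddCommGrpCat.ofHom (Finsupp.mapDomain.addMonoidHom f)
  map_id S := AddCommGrpCat.hom_ext Finsupp.mapDomain.addMonoidHom_id
  map_comp f g := AddCommGrpCat.hom_ext (Finsupp.mapDomain.addMonoidHom_comp g f)

/-- The singular chain complex with coefficients in the abelian group `G`. -/
noncomputable def singularChainComplexFunctor (G : Type) [AddCommGroup G] :
    TopCat.{0} ⥤ ChainComplex AddCommGrpCat ℕ :=
  TopCat.toSSet ⋙ ((SimplicialObject.whiskering (Type 0) AddCommGrpCat).obj (coeffFunctor G)) ⋙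
    AlgebraicTopology.alternatingFaceMapComplex AddCommGrpCat

/-- Singular homology with coefficients in `G`, in degree `k : ℤ` (trivial in negative degrees). -/
noncomputable def singularHomologyFunctor (G : Type) [AddCommGroup G] (k : ℤ) :
    TopCat.{0} ⥤ AddCommGrpCat :=
  if 0 ≤ k then
    singularChainComplexFunctor G ⋙ HomologicalComplex.homologyFunctor AddCommGrpCat _ k.toNat
  else (Functor.const _).obj (AddCommGrpCat.of PUnit)

/-- The sublevel set `X⟨φ ≼ u⟩`. -/
def sublevelSet {n : ℕ} {X : Type} (φ : X → Fin n → ℝ) (u : Fin n → ℝ) : Set X :=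
  {x | ∀ i, φ x i ≤ u i}

/-- The sublevel set as a topological space. -/
def sublevelTop {n : ℕ} {X : Type} [TopologicalSpace X] (φ : X → Fin n → ℝ)
    (u : Fin n → ℝ) : TopCat.{0} :=
  TopCat.of (sublevelSet φ u)

/-- The inclusion of sublevel sets. -/
def sublevelIncl {n : ℕ} {X : Type} [TopologicalSpace X] (φ : X → Fin n → ℝ)
    {u v : Fin n → ℝ} (h : ∀ i, u i ≤ v i) : sublevelTop φ u ⟶ sublevelTop φ v :=
  TopCat.ofHom (ContinuousMap.mk (Set.inclusion (fun _x hx i => le_trans (hx i) (h i)))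
    (continuous_inclusion _))

/-- The multidimensional `k`-th persistent homology group of `(X, φ)` at `(u, v)`,
with coefficients in the abelian group `G`: the image of the homomorphism induced
in homology by the inclusion of sublevel sets. -/
noncomputable def persistentHomologyGroup (G : Type) [AddCommGroup G] (k : ℤ)
    {n : ℕ} {X : Type} [TopologicalSpace X] (φ : X → Fin n → ℝ)
    {u v : Fin n → ℝ} (h : ∀ i, u i ≤ v i) : Type :=
  AddMonoidHom.range ((singularHomologyFunctor G k).map (sublevelIncl φ h)).hom

noncomputable instance (G : Type) [AddCommGroup G] (k : ℤ)
    {n : ℕ} {X : Type} [TopologicalSpace X] (φ : X → Fin n → ℝ)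
    {u v : Fin n → ℝ} (h : ∀ i, u i ≤ v i) :
    AddCommGroup (persistentHomologyGroup G k φ h) := by
  unfold persistentHomologyGroup; infer_instance

/-- There is a surjective homomorphism from a subgroup of `A` onto `B`. -/
def ExistsSurjHomFromSubgroup (A B : Type) [AddCommGroup A] [AddCommGroup B] : Prop :=
  ∃ (S : AddSubgroup A) (f : S →+ B), Function.Surjective f

/-- The set `E` of all `ε ≥ 0` such that, for every `(u,v) ∈ Δ⁺`, surjective homomorphisms
exist from a subgroup of `H_k^{(X,φ)}(u,v)` onto `H_k^{(Y,ψ)}(u-ε⃗,v+ε⃗)` and from a subgroup of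
`H_k^{(Y,ψ)}(u,v)` onto `H_k^{(X,φ)}(u-ε⃗,v+ε⃗)`. -/
def dTSet (G : Type) [AddCommGroup G] (k : ℤ) {n : ℕ} {X Y : Type}
    [TopologicalSpace X] [TopologicalSpace Y]
    (φ : X → Fin n → ℝ) (ψ : Y → Fin n → ℝ) : Set ℝ :=
  {ε | ∃ hε : 0 ≤ ε, ∀ u v : Fin n → ℝ, ∀ h : ∀ i, u i < v i,
    ExistsSurjHomFromSubgroup
      (persistentHomologyGroup G k φ (fun i => (h i).le))
      (persistentHomologyGroup G k ψ
        (u := fun i => u i - ε) (v := fun i => v i + ε)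
        (fun i => by have := (h i).le; linarith)) ∧
    ExistsSurjHomFromSubgroup
      (persistentHomologyGroup G k ψ (fun i => (h i).le))
      (persistentHomologyGroup G k φ
        (u := fun i => u i - ε) (v := fun i => v i + ε)
        (fun i => by have := (h i).le; linarith))}

/-- The pseudo-distance `d_T` between the `k`-th persistent homology groups of `(X,φ)`
and `(Y,ψ)`: the infimum of the set `E` (`∞` if `E` is empty). -/
noncomputable def dT (G : Type) [AddCommGroup G] (k : ℤ) {n : ℕ} {X Y : Type}
    [TopologicalSpace X] [TopologicalSpace Y]
    (φ : X → Fin n → ℝ) (ψ : Y → Fin n → ℝ) : ENNReal :=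
  sInf (ENNReal.ofReal '' dTSet G k φ ψ)

/-- The sup-norm (max-norm) distance between two `ℝⁿ`-valued functions. -/
noncomputable def supNormDist {n : ℕ} {X : Type} (φ ψ : X → Fin n → ℝ) : ENNReal :=
  ⨆ (x : X) (i : Fin n), ENNReal.ofReal |φ x i - ψ x i|

/-- The natural pseudo-distance between `(X,φ)` and `(Y,ψ)`:
`inf_h ‖φ - ψ ∘ h‖_∞` over all homeomorphisms `h : X → Y` (`∞` if none exists). -/
noncomputable def naturalPseudoDistance {n : ℕ} {X Y : Type}
    [TopologicalSpace X] [TopologicalSpace Y]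
    (φ : X → Fin n → ℝ) (ψ : Y → Fin n → ℝ) : ENNReal :=
  ⨅ (h : X ≃ₜ Y), supNormDist φ (fun x => ψ (h x))

/-!
A surjection from a subgroup of `A` onto `B`, followed by one from a subgroup `T` of `B` onto `C`,
yields one from the preimage of `T` onto `C`. Chaining the conditions for `a ∈ E(φ, ψ)` at `(u, v)`
with those for `b ∈ E(ψ, χ)` at the widened pair `(u - a⃗, v + a⃗)` (and symmetrically) shows
`a + b ∈ E(φ, χ)`; taking infima yields the triangle inequality.
-/

namespace ExistsSurjHomFromSubgroup

variable {A B C : Type} [AddCommGroup A] [AddCommGroup B] [AddCommGroup C]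

theorem of_addSubgroup {S : AddSubgroup A} (h : ExistsSurjHomFromSubgroup S C) :
    ExistsSurjHomFromSubgroup A C := by
  obtain ⟨U, g, hg⟩ := h
  let e := AddSubgroup.equivMapOfInjective U S.subtype Subtype.coe_injective
  exact ⟨U.map S.subtype, g.comp e.symm.toAddMonoidHom, hg.comp e.symm.surjective⟩

theorem of_surjective (f : A →+ B) (hf : Function.Surjective f)
    (h : ExistsSurjHomFromSubgroup B C) : ExistsSurjHomFromSubgroup A C := by
  obtain ⟨T, g, hg⟩ := h
  exact ⟨T.comap f, g.comp (f.addSubgroupComap T),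
    hg.comp (f.addSubgroupComap_surjective_of_surjective T hf)⟩

theorem trans (h₁ : ExistsSurjHomFromSubgroup A B) (h₂ : ExistsSurjHomFromSubgroup B C) :
    ExistsSurjHomFromSubgroup A C := by
  obtain ⟨S, f, hf⟩ := h₁
  exact of_addSubgroup (of_surjective f hf h₂)

theorem congr_persistentHomologyGroup (G : Type) [AddCommGroup G] (k : ℤ) {n : ℕ} {X : Type}
    [TopologicalSpace X] (φ : X → Fin n → ℝ) {u u' v v' : Fin n → ℝ} (hu : u = u') (hv : v = v')
    {h : ∀ i, u i ≤ v i} {h' : ∀ i, u' i ≤ v' i}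
    (H : ExistsSurjHomFromSubgroup A (persistentHomologyGroup G k φ h)) :
    ExistsSurjHomFromSubgroup A (persistentHomologyGroup G k φ h') := by
  subst hu hv
  exact H

end ExistsSurjHomFromSubgroup

section dT

variable {G : Type} [AddCommGroup G] {k : ℤ} {n : ℕ} {X Y Z : Type}
  [TopologicalSpace X] [TopologicalSpace Y] [TopologicalSpace Z]
  {φ : X → Fin n → ℝ} {ψ : Y → Fin n → ℝ} {χ : Z → Fin n → ℝ}

theorem add_mem_dTSet {a b : ℝ} (ha : a ∈ dTSet G k φ ψ) (hb : b ∈ dTSet G k ψ χ) :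
    a + b ∈ dTSet G k φ χ := by
  obtain ⟨ha₀, hA⟩ := ha
  obtain ⟨hb₀, hB⟩ := hb
  refine ⟨add_nonneg ha₀ hb₀, fun u v h => ?_⟩
  have hwide_a : ∀ i, u i - a < v i + a := fun i => by linarith [h i]
  have hwide_b : ∀ i, u i - b < v i + b := fun i => by linarith [h i]
  constructor
  · exact .congr_persistentHomologyGroup G k χ (by funext i; ring) (by funext i; ring)
      ((hA u v h).1.trans (hB _ _ hwide_a).1)
  · exact .congr_persistentHomologyGroup G k φ (by funext i; ring) (by funext i; ring)
      ((hB u v h).2.trans (hA _ _ hwide_b).2)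

theorem dT_le_add : dT G k φ χ ≤ dT G k φ ψ + dT G k ψ χ := by
  simp only [dT, sInf_image']
  refine ENNReal.le_iInf_add_iInf fun a b => ?_
  rw [← ENNReal.ofReal_add a.2.1 b.2.1]
  exact iInf_le_of_le ⟨_, add_mem_dTSet a.2 b.2⟩ le_rfl

end dT

theorem dT_triangle_general (G : Type) [AddCommGroup G] (k : ℤ) (n : ℕ)
    {X Y Z : Type} [TopologicalSpace X] [TopologicalSpace Y] [TopologicalSpace Z]
    (φ : X → Fin n → ℝ) (ψ : Y → Fin n → ℝ) (χ : Z → Fin n → ℝ)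
    (ε₁ ε₂ : ENNReal) (hε₁ : dT G k φ ψ = ε₁) (hε₂ : dT G k ψ χ = ε₂) :
    dT G k φ χ ≤ ε₁ + ε₂ := by
  subst hε₁ hε₂
  exact dT_le_add

/-- **Triangle inequality for `d_T`.** For topological spaces `X`, `Y`, `Z` with continuous
filtering functions `φ : X → ℝⁿ`, `ψ : Y → ℝⁿ`, `χ : Z → ℝⁿ` and any integer `k`, if
`d_T(H_k^{(X,φ)}, H_k^{(Y,ψ)}) = ε₁` and `d_T(H_k^{(Y,ψ)}, H_k^{(Z,χ)}) = ε₂` are finite,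
then `d_T(H_k^{(X,φ)}, H_k^{(Z,χ)}) ≤ ε₁ + ε₂`. -/
theorem dT_triangle (G : Type) [AddCommGroup G] (k : ℤ) (n : ℕ)
    {X Y Z : Type} [TopologicalSpace X] [TopologicalSpace Y] [TopologicalSpace Z]
    (φ : X → Fin n → ℝ) (ψ : Y → Fin n → ℝ) (χ : Z → Fin n → ℝ)
    (hφ : Continuous φ) (hψ : Continuous ψ) (hχ : Continuous χ)
    (ε₁ ε₂ : ENNReal) (hε₁ : dT G k φ ψ = ε₁) (hε₂ : dT G k ψ χ = ε₂)
    (hfin₁ : ε₁ ≠ ⊤) (hfin₂ : ε₂ ≠ ⊤) :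
    dT G k φ χ ≤ ε₁ + ε₂ :=
  dT_triangle_general G k n φ ψ χ ε₁ ε₂ hε₁ hε₂
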